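/- In the 3×3 Attack-Defense game with 0 ≤ λ < 1/3, the profile (X, X) is a λ-power-regularized Nash equilibrium, and it yields strictly higher task utility (3 for each player) than the profile (Y, Y) (which yields 2). -/
import Mathlib


/-- Row payoffs u₁ of the Attack-Defense game: actions 0 = X, 1 = Y, 2 = Z.
Player 2's payoff is u₂(a,b) = u₁(b,a). -/
def adPayoff : Fin 3 → Fin 3 → ℝ := ![![3, 3, 0], ![2, 2, 2], ![0, 0, 0]]

/-- Player 1's power-regularized utility at profile (a,b):
u₁(a,b) − λ·(u₁(a,b) − min_{b'} u₁(a,b')). -/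
noncomputable def prUtil1 (lam : ℝ) (a b : Fin 3) : ℝ :=
  adPayoff a b - lam * (adPayoff a b - Finset.univ.inf' Finset.univ_nonempty (adPayoff a))

/-- Player 2's power-regularized utility at profile (a,b), symmetric to player 1's. -/
noncomputable def prUtil2 (lam : ℝ) (a b : Fin 3) : ℝ := prUtil1 lam b a

lemma inf_row (f : Fin 3 → ℝ) :
    Finset.univ.inf' Finset.univ_nonempty f = min (f 0) (min (f 1) (f 2)) := by
  simp [show (Finset.univ : Finset (Fin 3)) = {0, 1, 2} from rfl, Finset.inf'_insert]

/-- In the Attack-Defense game with 0 ≤ λ < 1/3, the profile (X, X) is a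
λ-power-regularized Nash equilibrium, and it yields strictly higher task utility
(3 for each player) than the profile (Y, Y) (which yields 2). -/
theorem XX_is_power_regularized_nash_and_better_task
    (lam : ℝ) (hlam0 : 0 ≤ lam) (hlam : lam < 1 / 3) :
    (∀ a : Fin 3, prUtil1 lam a 0 ≤ prUtil1 lam 0 0) ∧
    (∀ b : Fin 3, prUtil2 lam 0 b ≤ prUtil2 lam 0 0) ∧
    adPayoff 0 0 = 3 ∧ adPayoff 1 1 = 2 ∧ adPayoff 1 1 < adPayoff 0 0 := by
  refine ⟨?_, ?_, ?_, ?_, ?_⟩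
  · intro a; fin_cases a <;>
      simp [prUtil1, inf_row, adPayoff] <;> nlinarith
  · intro b; fin_cases b <;>
      simp [prUtil2, prUtil1, inf_row, adPayoff] <;> nlinarith
  all_goals norm_num [adPayoff]
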